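/- arXiv:2409.18508 — 5 statements merged into one kernel-verified Lean document; each statement's English description precedes it below -/
import Mathlib

section
/- Let μ ≥ 0 and M = A + w uᵀ with A ∈ M_{n,p}(ℝ), w ∈ ℝⁿ with ‖w‖ = 1, u ∈ ℝᵖ. Set B = (I − wwᵀ)A, D_μ = BᵀB + μI, r = u + Aᵀw, and assume D_μ and MᵀM + μI are invertible. Then M(MᵀM + μI)⁻¹Mᵀ = C − bbᵀ/(1+d), where C = B D_μ⁻¹ Bᵀ + wwᵀ, b = B D_μ⁻¹ r − w, and d = rᵀ D_μ⁻¹ r. -/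
open Matrix

/-! Writing `r = u + Aᵀw` one has `M = B + w rᵀ` with `Bᵀw = 0`, so `MᵀM + μI = D_μ + r rᵀ` is a
rank-one update of `D_μ`. The matrix determinant lemma gives `1 + d ≠ 0` from the invertibility of
`MᵀM + μI`, the Sherman–Morrison formula then inverts it, and expanding
`(B + w rᵀ)(D_μ + r rᵀ)⁻¹(B + w rᵀ)ᵀ` with `D_μ` symmetric leaves the stated combination of
`B D_μ⁻¹ Bᵀ`, `wwᵀ` and `bbᵀ`. -/

section RankOneUpdate

variable {R n p : Type*} [CommRing R] [Fintype n]

theorem Matrix.one_sub_vecMulVec_self_mulVec [DecidableEq n] {w : n → R} (hw : w ⬝ᵥ w = 1) :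
    (1 - vecMulVec w w) *ᵥ w = 0 := by
  rw [sub_mulVec, one_mulVec, vecMulVec_mulVec, hw, MulOpposite.op_one, one_smul, sub_self]

theorem Matrix.add_vecMulVec_eq_one_sub_vecMulVec_mul_add [DecidableEq n] (A : Matrix n p R)
    (w : n → R) (u : p → R) :
    A + vecMulVec w u = (1 - vecMulVec w w) * A + vecMulVec w (u + Aᵀ *ᵥ w) := by
  rw [Matrix.sub_mul, Matrix.one_mul, vecMulVec_mul, ← mulVec_transpose, vecMulVec_add]
  abel

theorem Matrix.transpose_one_sub_vecMulVec_mul_mulVec [DecidableEq n] {w : n → R}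
    (hw : w ⬝ᵥ w = 1) (A : Matrix n p R) : ((1 - vecMulVec w w) * A)ᵀ *ᵥ w = 0 := by
  rw [transpose_mul, transpose_sub, transpose_one, transpose_vecMulVec, ← mulVec_mulVec,
    one_sub_vecMulVec_self_mulVec hw, mulVec_zero]

theorem Matrix.transpose_mul_self_add_vecMulVec {B : Matrix n p R} {w : n → R}
    (hw : w ⬝ᵥ w = 1) (hBw : Bᵀ *ᵥ w = 0) (r : p → R) :
    (B + vecMulVec w r)ᵀ * (B + vecMulVec w r) = Bᵀ * B + vecMulVec r r := by
  rw [transpose_add, transpose_vecMulVec, Matrix.add_mul, Matrix.mul_add, Matrix.mul_add,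
    mul_vecMulVec, hBw, vecMulVec_mul, ← mulVec_transpose, hBw, vecMulVec_mul_vecMulVec, hw,
    one_smul, zero_vecMulVec, vecMulVec_zero]
  abel

end RankOneUpdate

theorem Matrix.add_vecMulVec_mul_mul_transpose {R n p : Type*} [CommRing R] [Fintype p]
    {E : Matrix p p R} (hE : E.IsSymm)
    (B : Matrix n p R) (w : n → R) (r : p → R) :
    (B + vecMulVec w r) * E * (B + vecMulVec w r)ᵀ =
      B * E * Bᵀ + vecMulVec (B *ᵥ (E *ᵥ r)) w + vecMulVec w (B *ᵥ (E *ᵥ r)) +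
        (r ⬝ᵥ (E *ᵥ r)) • vecMulVec w w := by
  have hrE : r ᵥ* E = E *ᵥ r := by rw [← mulVec_transpose, hE.eq]
  rw [transpose_add, transpose_vecMulVec, Matrix.add_mul, Matrix.add_mul, Matrix.mul_add,
    Matrix.mul_add]
  simp only [Matrix.mul_assoc, mul_vecMulVec, vecMulVec_mul, mulVec_mulVec, vecMulVec_mulVec,
    op_smul_eq_smul, smul_vecMulVec, hrE, vecMul_transpose, dotProduct_comm (E *ᵥ r)]
  abel

theorem Matrix.det_add_vecMulVec {R m : Type*} [CommRing R] [Fintype m] [DecidableEq m]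
    {D : Matrix m m R} (hD : IsUnit D.det) (x y : m → R) :
    (D + vecMulVec x y).det = D.det * (1 + y ⬝ᵥ (D⁻¹ *ᵥ x)) := by
  rw [vecMulVec_eq Unit, det_add_replicateCol_mul_replicateRow hD,
    det_unique (1 + replicateRow Unit y * D⁻¹ * replicateCol Unit x), Matrix.mul_assoc,
    ← replicateCol_mulVec, add_apply, one_apply_eq, replicateRow_mul_replicateCol_apply]

theorem Matrix.inv_add_vecMulVec {K m : Type*} [Field K] [Fintype m] [DecidableEq m]
    {D : Matrix m m K} (hD : IsUnit D.det) (x y : m → K) (h : 1 + y ⬝ᵥ (D⁻¹ *ᵥ x) ≠ 0) :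
    (D + vecMulVec x y)⁻¹ =
      D⁻¹ - (1 + y ⬝ᵥ (D⁻¹ *ᵥ x))⁻¹ • vecMulVec (D⁻¹ *ᵥ x) (y ᵥ* D⁻¹) := by
  refine inv_eq_right_inv ?_
  rw [Matrix.mul_sub, Matrix.mul_smul, Matrix.add_mul, Matrix.add_mul, mul_nonsing_inv _ hD,
    mul_vecMulVec, mulVec_mulVec, mul_nonsing_inv _ hD, one_mulVec, vecMulVec_mul,
    vecMulVec_mul_vecMulVec, vecMulVec_smul]
  match_scalars <;> field_simp; ring

theorem Matrix.add_vecMulVec_mul_inv_add_vecMulVec_mul_transpose {K n p : Type*} [Field K]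
    [Fintype n] [Fintype p] [DecidableEq p] (B : Matrix n p K) {D : Matrix p p K}
    (hD : IsUnit D.det) (hDs : D.IsSymm) (w : n → K) (r : p → K)
    (hd : 1 + r ⬝ᵥ (D⁻¹ *ᵥ r) ≠ 0) :
    (B + vecMulVec w r) * (D + vecMulVec r r)⁻¹ * (B + vecMulVec w r)ᵀ =
      B * D⁻¹ * Bᵀ + vecMulVec w w -
        (1 + r ⬝ᵥ (D⁻¹ *ᵥ r))⁻¹ • vecMulVec (B *ᵥ (D⁻¹ *ᵥ r) - w) (B *ᵥ (D⁻¹ *ᵥ r) - w) := by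
  have hE : D⁻¹.IsSymm := hDs.inv
  rw [inv_add_vecMulVec hD r r hd, ← mulVec_transpose, hE.eq, Matrix.mul_sub, Matrix.sub_mul,
    Matrix.mul_smul, Matrix.smul_mul, add_vecMulVec_mul_mul_transpose hE, mul_vecMulVec,
    vecMulVec_mul, vecMul_transpose, add_mulVec, vecMulVec_mulVec, op_smul_eq_smul]
  simp only [vecMulVec_add, add_vecMulVec, vecMulVec_sub, sub_vecMulVec, vecMulVec_smul,
    smul_vecMulVec]
  -- with `c = (1 + d)⁻¹`, the coefficients match since `1 - c d = c` and `d - c d² = c d`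
  match_scalars <;> field_simp <;> ring

theorem rank_one_score_formula_general {n p : Type*} [Fintype n] [Fintype p]
    [DecidableEq n] [DecidableEq p]
    (μ : ℝ)
    (A : Matrix n p ℝ) (w : n → ℝ) (u : p → ℝ)
    (hw : w ⬝ᵥ w = 1)
    (M : Matrix n p ℝ) (hM : M = A + Matrix.vecMulVec w u)
    (B : Matrix n p ℝ) (hB : B = (1 - Matrix.vecMulVec w w) * A)
    (D : Matrix p p ℝ) (hD : D = Bᵀ * B + μ • 1)
    (r : p → ℝ) (hr : r = u + Aᵀ *ᵥ w)
    (hDinv : IsUnit D.det)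
    (hMinv : IsUnit (Mᵀ * M + μ • (1 : Matrix p p ℝ)).det) :
    M * (Mᵀ * M + μ • (1 : Matrix p p ℝ))⁻¹ * Mᵀ =
      (B * D⁻¹ * Bᵀ + Matrix.vecMulVec w w)
        - (1 + r ⬝ᵥ (D⁻¹ *ᵥ r))⁻¹ •
            Matrix.vecMulVec (B *ᵥ (D⁻¹ *ᵥ r) - w) (B *ᵥ (D⁻¹ *ᵥ r) - w) := by
  have hMB : M = B + vecMulVec w r := by
    rw [hM, hB, hr, add_vecMulVec_eq_one_sub_vecMulVec_mul_add]
  have hBw : Bᵀ *ᵥ w = 0 := hB ▸ transpose_one_sub_vecMulVec_mul_mulVec hw A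
  have hS : Mᵀ * M + μ • 1 = D + vecMulVec r r := by
    rw [hMB, transpose_mul_self_add_vecMulVec hw hBw, hD, add_right_comm]
  have hDs : D.IsSymm := by
    rw [hD]
    exact .add (by rw [IsSymm, transpose_mul, transpose_transpose]) (isSymm_one.smul μ)
  have hd : 1 + r ⬝ᵥ (D⁻¹ *ᵥ r) ≠ 0 := by
    rw [hS, det_add_vecMulVec hDinv] at hMinv
    exact right_ne_zero_of_mul hMinv.ne_zero
  rw [hS, hMB, add_vecMulVec_mul_inv_add_vecMulVec_mul_transpose B hDinv hDs w r hd]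

/-- Rank-one perturbation formula for the regularized projection matrix
`M (MᵀM + μI)⁻¹ Mᵀ` where `M = A + w uᵀ` and `‖w‖ = 1`. -/
theorem rank_one_score_formula {n p : Type*} [Fintype n] [Fintype p]
    [DecidableEq n] [DecidableEq p]
    (μ : ℝ) (hμ : 0 ≤ μ)
    (A : Matrix n p ℝ) (w : n → ℝ) (u : p → ℝ)
    (hw : w ⬝ᵥ w = 1)
    (M : Matrix n p ℝ) (hM : M = A + Matrix.vecMulVec w u)
    (B : Matrix n p ℝ) (hB : B = (1 - Matrix.vecMulVec w w) * A)
    (D : Matrix p p ℝ) (hD : D = Bᵀ * B + μ • 1)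
    (r : p → ℝ) (hr : r = u + Aᵀ *ᵥ w)
    (hDinv : IsUnit D.det)
    (hMinv : IsUnit (Mᵀ * M + μ • (1 : Matrix p p ℝ)).det) :
    M * (Mᵀ * M + μ • (1 : Matrix p p ℝ))⁻¹ * Mᵀ =
      (B * D⁻¹ * Bᵀ + Matrix.vecMulVec w w)
        - (1 + r ⬝ᵥ (D⁻¹ *ᵥ r))⁻¹ •
            Matrix.vecMulVec (B *ᵥ (D⁻¹ *ᵥ r) - w) (B *ᵥ (D⁻¹ *ᵥ r) - w) :=
  rank_one_score_formula_general μ A w u hw M hM B hB D hD r hr hDinv hMinv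
end

section
/- With the notation of the rank-one perturbation lemma: if additionally A ∈ M_{n+1,p}(ℝ) has the form A = π⊥_𝟙 V for some V ∈ M_{n+1,p}(ℝ) (where π⊥_𝟙 = I − (n+1)⁻¹ 𝟙𝟙ᵀ) and w = v/‖v‖ with v = e_{n+1} − (n+1)⁻¹𝟙, then B := (I − wwᵀ)A satisfies B_{ij} = V_{ij} − n⁻¹ ∑_{l=1}^n V_{lj} for i ≤ n, and the last row of B is zero: e_{n+1}ᵀ B = 0. -/
/-!
The columns of `A = π⊥_𝟙 V` sum to zero, so `vᵀA` is the last row `a` of `A`; and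
`wwᵀ = vvᵀ / ‖v‖²` with `‖v‖² = n/(n+1)`. Hence `B = A - ((n+1)/n) v aᵀ`: since
`v_{n+1} = n/(n+1)` this kills the last row, and since `v_i = -1/(n+1)` for `i ≤ n` it adds `a/n`
to every other row, which turns the centring by `n+1` into a centring by `n` over the first `n` rows.
-/

open Matrix

namespace Matrix

variable {m p R : Type*} [Fintype m]

theorem vecMulVec_inv_sqrt_smul_self (v : m → ℝ) :
    vecMulVec ((√(v ⬝ᵥ v))⁻¹ • v) ((√(v ⬝ᵥ v))⁻¹ • v) = (v ⬝ᵥ v)⁻¹ • vecMulVec v v := by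
  rw [smul_vecMulVec, vecMulVec_smul, smul_smul, ← mul_inv,
    Real.mul_self_sqrt (by simpa using dotProduct_self_star_nonneg v)]

variable [DecidableEq m]

theorem one_sub_vecMulVec_mul_apply [Ring R] (u w : m → R) (A : Matrix m p R) (i : m) (j : p) :
    ((1 - vecMulVec u w : Matrix m m R) * A) i j = A i j - u i * (w ᵥ* A) j := by
  rw [Matrix.sub_mul, Matrix.one_mul, vecMulVec_mul]
  rfl

variable [CommRing R]

theorem vecMul_one_sub_smul_vecMulVec_one_mul {c : R} (hc : c * Fintype.card m = 1)
    (V : Matrix m p R) :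
    (fun _ => 1) ᵥ* ((1 - c • vecMulVec (fun _ => 1) (fun _ => 1) : Matrix m m R) * V) = 0 := by
  rw [Matrix.sub_mul, Matrix.one_mul, smul_mul, vecMulVec_mul, vecMul_sub, vecMul_smul,
    vecMul_vecMulVec]
  simp only [dotProduct, mul_one, Finset.sum_const, Finset.card_univ, nsmul_eq_mul]
  rw [smul_smul, hc, one_smul, sub_self]

variable (a : m) (c : R)

theorem indicator_sub_const_vecMul (A : Matrix m p R) :
    (fun i => (if i = a then 1 else 0) - c) ᵥ* A = A a - c • ((fun _ => 1) ᵥ* A) := by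
  ext j
  simp [vecMul, dotProduct, sub_mul, Finset.sum_sub_distrib, Finset.mul_sum]

theorem indicator_sub_const_dotProduct_self :
    (fun i => (if i = a then 1 else 0) - c) ⬝ᵥ (fun i => (if i = a then 1 else 0) - c) =
      1 - 2 * c + Fintype.card m * c ^ 2 := by
  simp only [dotProduct, mul_sub, mul_ite, mul_one, mul_zero, sub_mul, ite_mul, one_mul, zero_mul,
    Finset.sum_sub_distrib, Finset.sum_ite_eq', Finset.mem_univ, ↓reduceIte, Finset.sum_const,
    Finset.card_univ, nsmul_eq_mul]
  ring

end Matrix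

/-- If `A = π⊥_𝟙 V` and `w = v/‖v‖` with `v = e_{n+1} − (n+1)⁻¹𝟙`, then
`B = (I − wwᵀ)A` has entries `B_{ij} = V_{ij} − n⁻¹ ∑_{l=1}^n V_{lj}` for `i ≤ n`,
and its last row is zero. -/
theorem centered_matrix_rows (n p : ℕ) (hn : 0 < n)
    (V : Matrix (Fin (n + 1)) (Fin p) ℝ)
    (v : Fin (n + 1) → ℝ)
    (hv : v = fun i => (if i = Fin.last n then (1 : ℝ) else 0) - ((n : ℝ) + 1)⁻¹)
    (w : Fin (n + 1) → ℝ) (hw : w = (Real.sqrt (v ⬝ᵥ v))⁻¹ • v)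
    (A : Matrix (Fin (n + 1)) (Fin p) ℝ)
    (hA : A = ((1 : Matrix (Fin (n + 1)) (Fin (n + 1)) ℝ) - ((n : ℝ) + 1)⁻¹ • Matrix.vecMulVec (fun _ => 1) (fun _ => 1)) * V)
    (B : Matrix (Fin (n + 1)) (Fin p) ℝ)
    (hB : B = ((1 : Matrix (Fin (n + 1)) (Fin (n + 1)) ℝ) - Matrix.vecMulVec w w) * A) :
    (∀ (i : Fin n) (j : Fin p),
        B i.castSucc j = V i.castSucc j - (n : ℝ)⁻¹ * ∑ l : Fin n, V l.castSucc j)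
      ∧ (∀ j : Fin p, B (Fin.last n) j = 0) := by
  have hcard : ((n : ℝ) + 1)⁻¹ * Fintype.card (Fin (n + 1)) = 1 := by
    simp only [Fintype.card_fin, Nat.cast_add, Nat.cast_one]
    field_simp
  have hA_apply (i j) : A i j = V i j - ((n : ℝ) + 1)⁻¹ * ∑ l, V l j := by
    rw [hA, ← smul_vecMulVec, one_sub_vecMulVec_mul_apply]
    simp [vecMul, dotProduct]
  have hvA : v ᵥ* A = A (Fin.last n) := by
    rw [hv, indicator_sub_const_vecMul, hA, vecMul_one_sub_smul_vecMulVec_one_mul hcard,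
      smul_zero, sub_zero]
  have hvv : v ⬝ᵥ v = n / (n + 1) := by
    rw [hv, indicator_sub_const_dotProduct_self]
    simp only [Fintype.card_fin, Nat.cast_add, Nat.cast_one, inv_pow]
    field_simp
    ring
  have hB_apply (i j) : B i j = A i j - (n + 1) / n * v i * A (Fin.last n) j := by
    rw [hB, hw, vecMulVec_inv_sqrt_smul_self, ← smul_vecMulVec, one_sub_vecMulVec_mul_apply, hvA,
      hvv, Pi.smul_apply, smul_eq_mul, inv_div, mul_assoc]
  refine ⟨fun i j => ?_, fun j => ?_⟩
  · rw [hB_apply, hA_apply, hA_apply, hv, Fin.sum_univ_castSucc]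
    simp only [(Fin.castSucc_lt_last i).ne, ↓reduceIte, zero_sub, mul_neg, neg_mul,
      sub_neg_eq_add]
    field_simp
    ring
  · rw [hB_apply, hv]
    simp only [↓reduceIte]
    field_simp
    ring
end

section
/- Let T be a random vector in ℝˡ whose law has density f(x) = g(‖x‖²) with g : ℝ₊ → ℝ₊ nonincreasing. Let t > 0, s ∈ ℝˡ, and δ ∈ ℝ₊ˡ with ∏ᵢ δᵢ = 1. Then ℙ(∑ᵢ δᵢ(Tᵢ + sᵢ)² ≤ t) ≤ ℙ(∑ᵢ Tᵢ² ≤ t); i.e. the centered ball of radius √t maximizes the probability among all ellipsoids of the same Lebesgue volume. -/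
open MeasureTheory
open ENNReal

/-! The ellipsoid `{∑ᵢ δᵢ (xᵢ + sᵢ)² ≤ t}` is the preimage of the ball `{‖x‖² ≤ t}` under the affine
map `x ↦ diag(√δ) (x + s)`, which has determinant `1`, so both sets have the same Lebesgue volume.
The ball is a superlevel set of the radial density (at least `g t` on it, at most `g t` off it),
so replacing the part of the ellipsoid outside the ball by the equal-volume part of the ball
outside the ellipsoid can only increase the mass. -/

theorem setLIntegral_le_setLIntegral_of_superlevel {α : Type*} [MeasurableSpace α]
    {μ : Measure α} {A B : Set α} {f : α → ℝ≥0∞} {c : ℝ≥0∞}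
    (hA : MeasurableSet A) (hB : MeasurableSet B) (hAB : μ A = μ B) (hB_fin : μ B ≠ ∞)
    (hf_le : ∀ x ∉ B, f x ≤ c) (hf_ge : ∀ x ∈ B, c ≤ f x) :
    ∫⁻ x in A, f x ∂μ ≤ ∫⁻ x in B, f x ∂μ := by
  have hdiff : μ (A \ B) = μ (B \ A) :=
    measure_sdiff_symm hA.nullMeasurableSet hB.nullMeasurableSet hAB
      (measure_ne_top_of_subset Set.inter_subset_right hB_fin)
  rw [← lintegral_inter_add_sdiff f A hB, ← lintegral_inter_add_sdiff f B hA, Set.inter_comm B A]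
  refine add_le_add le_rfl ?_
  calc ∫⁻ x in A \ B, f x ∂μ ≤ ∫⁻ _ in A \ B, c ∂μ :=
        setLIntegral_mono measurable_const fun x hx => hf_le x hx.2
    _ = ∫⁻ _ in B \ A, c ∂μ := by rw [setLIntegral_const, setLIntegral_const, hdiff]
    _ ≤ ∫⁻ x in B \ A, f x ∂μ := setLIntegral_mono' (hB.diff hA) fun x hx => hf_ge x hx.1

theorem Measure.addHaar_preimage_linearMap_add {E : Type*} [NormedAddCommGroup E]
    [NormedSpace ℝ E] [MeasurableSpace E] [BorelSpace E] [FiniteDimensional ℝ E]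
    (μ : Measure E) [μ.IsAddHaarMeasure] {L : E →ₗ[ℝ] E} (hL : LinearMap.det L = 1) (v : E)
    (s : Set E) : μ ((fun x => L (v + x)) ⁻¹' s) = μ s := by
  change μ ((v + ·) ⁻¹' (L ⁻¹' s)) = μ s
  rw [measure_preimage_add, Measure.addHaar_preimage_linearMap μ (by simp [hL]), hL]
  simp

theorem volume_ellipsoid_eq_volume_ball {ι : Type*} [Fintype ι] (δ : ι → ℝ)
    (hδ : ∀ i, 0 ≤ δ i) (hprod : ∏ i, δ i = 1) (s : ι → ℝ) (t : ℝ) :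
    volume {x : EuclideanSpace ℝ ι | ∑ i, δ i * (x i + s i) ^ 2 ≤ t} =
      volume {x : EuclideanSpace ℝ ι | ∑ i, x i ^ 2 ≤ t} := by
  classical
  set L := Matrix.toEuclideanLin (Matrix.diagonal fun i => √(δ i))
  have hL : LinearMap.det L = 1 := by
    simp only [L, Matrix.toEuclideanLin_eq_toLin_orthonormal, LinearMap.det_toLin,
      Matrix.det_diagonal]
    rw [← Real.sqrt_prod _ fun i _ => hδ i, hprod, Real.sqrt_one]
  have hellipsoid : {x : EuclideanSpace ℝ ι | ∑ i, δ i * (x i + s i) ^ 2 ≤ t} =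
      (fun x => L (WithLp.toLp 2 s + x)) ⁻¹' {x | ∑ i, x i ^ 2 ≤ t} := by
    ext x
    simp [L, Matrix.mulVec_diagonal, ← mul_add, mul_pow, Real.sq_sqrt (hδ _), add_comm]
  rw [hellipsoid, Measure.addHaar_preimage_linearMap_add volume hL]

theorem spherical_ball_maximizes_probability_general {l : ℕ}
    {Ω : Type*} [MeasurableSpace Ω] (μ : Measure Ω)
    (T : Ω → EuclideanSpace ℝ (Fin l)) (hT : Measurable T)
    (g : ℝ → ℝ)
    (hg_mono : ∀ x y, 0 ≤ x → x ≤ y → g y ≤ g x)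
    (hlaw : μ.map T =
      (volume : Measure (EuclideanSpace ℝ (Fin l))).withDensity
        (fun x => ENNReal.ofReal (g (‖x‖ ^ 2))))
    (t : ℝ) (ht : 0 < t)
    (s : Fin l → ℝ) (δ : Fin l → ℝ) (hδ : ∀ i, 0 < δ i) (hprod : ∏ i, δ i = 1) :
    μ {ω | ∑ i, δ i * (T ω i + s i) ^ 2 ≤ t} ≤ μ {ω | ∑ i, (T ω i) ^ 2 ≤ t} := by
  set A := {x : EuclideanSpace ℝ (Fin l) | ∑ i, δ i * (x i + s i) ^ 2 ≤ t}
  set B := {x : EuclideanSpace ℝ (Fin l) | ∑ i, x i ^ 2 ≤ t}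
  have hA : MeasurableSet A := measurableSet_le (by fun_prop) measurable_const
  have hB : MeasurableSet B := measurableSet_le (by fun_prop) measurable_const
  have hB_fin : volume B ≠ ∞ := by
    refine (measure_mono fun x (hx : _ ≤ t) => ?_).trans_lt
      (measure_closedBall_lt_top (x := 0) (r := √t)) |>.ne
    rw [mem_closedBall_zero_iff]
    exact Real.le_sqrt_of_sq_le (by rwa [EuclideanSpace.real_norm_sq_eq])
  change μ (T ⁻¹' A) ≤ μ (T ⁻¹' B)
  rw [← Measure.map_apply hT hA, ← Measure.map_apply hT hB, hlaw, withDensity_apply _ hA,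
    withDensity_apply _ hB]
  refine setLIntegral_le_setLIntegral_of_superlevel (c := ENNReal.ofReal (g t)) hA hB
    (volume_ellipsoid_eq_volume_ball δ (fun i => (hδ i).le) hprod s t) hB_fin ?_ ?_
  · intro x hx
    refine ofReal_le_ofReal (hg_mono _ _ ht.le ?_)
    rw [EuclideanSpace.real_norm_sq_eq]
    exact (not_le.1 hx).le
  · intro x hx
    exact ofReal_le_ofReal (hg_mono _ _ (by positivity) (by rwa [EuclideanSpace.real_norm_sq_eq]))

/-- Anderson-type inequality: if `T` has a spherical density `g(‖x‖²)` with `g`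
nonincreasing, then among ellipsoids of the same volume as the centered ball of
radius `√t`, the ball maximizes the probability:
`ℙ(∑ᵢ δᵢ(Tᵢ+sᵢ)² ≤ t) ≤ ℙ(∑ᵢ Tᵢ² ≤ t)` whenever `∏ᵢ δᵢ = 1`. -/
theorem spherical_ball_maximizes_probability {l : ℕ}
    {Ω : Type*} [MeasurableSpace Ω] (μ : Measure Ω) [IsProbabilityMeasure μ]
    (T : Ω → EuclideanSpace ℝ (Fin l)) (hT : Measurable T)
    (g : ℝ → ℝ) (hg_nonneg : ∀ x, 0 ≤ g x)
    (hg_mono : ∀ x y, 0 ≤ x → x ≤ y → g y ≤ g x)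
    (hlaw : μ.map T =
      (volume : Measure (EuclideanSpace ℝ (Fin l))).withDensity
        (fun x => ENNReal.ofReal (g (‖x‖ ^ 2))))
    (t : ℝ) (ht : 0 < t)
    (s : Fin l → ℝ) (δ : Fin l → ℝ) (hδ : ∀ i, 0 < δ i) (hprod : ∏ i, δ i = 1) :
    μ {ω | ∑ i, δ i * (T ω i + s i) ^ 2 ≤ t} ≤ μ {ω | ∑ i, (T ω i) ^ 2 ≤ t} :=
  spherical_ball_maximizes_probability_general μ T hT g hg_mono hlaw t ht s δ hδ hprod
end

section
/- Let Σ be a symmetric positive semidefinite (k+ℓ)×(k+ℓ) real matrix with blocks Σ^{11} ∈ M_{k,k}, Σ^{12}, Σ^{21}, Σ^{22} ∈ M_{ℓ,ℓ}. For λ ≥ 0 write Σ_λ = Σ + λI; denote its blocks Σ_λ^{11} = Σ^{11} + λI_k etc. Then the map λ ↦ det(Σ_λ)/det(Σ_λ^{11}) is nondecreasing on (0,∞), and strictly increasing. Equivalently, det(Σ_λ/Σ_λ^{11}) is strictly increasing in λ. -/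
/-!
Write `Σ = [[A, B], [Bᴴ, D]]`. By the Schur determinant formula the ratio at `λ > 0` is
`det M(λ)` with `M(λ) = D + λ I - Bᴴ (A + λ I)⁻¹ B`, the Schur complement of the positive
definite block `A + λ I` in the positive semidefinite matrix `Σ + λ I`; hence `M(λ)` is
positive semidefinite. Since the inverse is antitone in the Loewner order,
`M(μ) - M(λ) = (μ - λ) I + Bᴴ ((A + λ I)⁻¹ - (A + μ I)⁻¹) B` is positive definite for
`λ < μ`, and the determinant is strictly monotone along such steps: if `0 ≤ X` and
`0 < Y - X`, write `Y = Qᴴ Q`; then `X = Qᴴ C Q` with `0 ≤ C < 1`, so all eigenvalues of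
`C` lie in `[0, 1)` and `det X = det C · det Y < det Y`.
-/

open Matrix

namespace Matrix

section LoewnerOrder

variable {n 𝕜 : Type*} [DecidableEq n] [RCLike 𝕜]
open scoped ComplexOrder

theorem PosSemidef.posDef_add_smul_one {A : Matrix n n 𝕜} (hA : A.PosSemidef) {c : ℝ}
    (hc : 0 < c) : (A + c • 1).PosDef :=
  PosDef.posSemidef_add hA (PosDef.one.smul hc)

variable [Fintype n]

theorem PosDef.inv_sub_inv_posSemidef {A B : Matrix n n 𝕜} (hA : A.PosDef)
    (hAB : (B - A).PosSemidef) : (A⁻¹ - B⁻¹).PosSemidef := by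
  have hB : B.PosDef := by simpa using hA.add_posSemidef hAB
  have hA₁ := nonsing_inv_mul A ((isUnit_iff_isUnit_det A).mp hA.isUnit)
  have hA₂ := mul_nonsing_inv A ((isUnit_iff_isUnit_det A).mp hA.isUnit)
  have hB₁ := nonsing_inv_mul B ((isUnit_iff_isUnit_det B).mp hB.isUnit)
  have hB₂ := mul_nonsing_inv B ((isUnit_iff_isUnit_det B).mp hB.isUnit)
  -- `A⁻¹ - B⁻¹ = B⁻¹ (B - A) A⁻¹`, symmetrized by substituting `A⁻¹ = B⁻¹ + A⁻¹ (B - A) B⁻¹`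
  have key : A⁻¹ - B⁻¹ =
      B⁻¹ᴴ * (B - A) * B⁻¹ + B⁻¹ᴴ * ((B - A)ᴴ * A⁻¹ * (B - A)) * B⁻¹ := by
    rw [hB.inv.1.eq, hAB.1.eq]
    simp only [mul_sub, sub_mul, ← Matrix.mul_assoc, hA₁, hA₂, hB₁, Matrix.one_mul]
    simp only [Matrix.mul_assoc, hB₂, Matrix.mul_one]
    abel
  rw [key]
  exact (hAB.conjTranspose_mul_mul_same _).add
    ((hA.inv.posSemidef.conjTranspose_mul_mul_same _).conjTranspose_mul_mul_same _)

end LoewnerOrder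

section Determinant

variable {n : Type*} [Fintype n] [DecidableEq n] [Nonempty n]

theorem PosSemidef.det_lt_one_of_posDef_one_sub {C : Matrix n n ℝ} (hC : C.PosSemidef)
    (h : (1 - C).PosDef) : C.det < 1 := by
  have hlt : ∀ i, hC.1.eigenvalues i < 1 := by
    intro i
    have hmem : 1 - hC.1.eigenvalues i ∈ spectrum ℝ (1 - C) := by
      rw [← map_one (algebraMap ℝ (Matrix n n ℝ)), ← spectrum.singleton_sub_eq]
      exact Set.sub_mem_sub rfl (hC.1.eigenvalues_mem_spectrum_real i)
    open scoped MatrixOrder in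
    exact sub_pos.mp (h.isStrictlyPositive.spectrum_pos hmem)
  obtain ⟨i⟩ := ‹Nonempty n›
  rw [hC.1.det_eq_prod_eigenvalues, ← Finset.mul_prod_erase _ _ (Finset.mem_univ i)]
  simp only [RCLike.ofReal_real_eq_id, id]
  calc _ ≤ hC.1.eigenvalues i * 1 := by
        gcongr
        · exact hC.eigenvalues_nonneg i
        · exact Finset.prod_le_one (fun j _ => hC.eigenvalues_nonneg j) fun j _ => (hlt j).le
    _ < 1 := by simpa using hlt i

open scoped MatrixOrder in
theorem PosSemidef.det_lt_det_of_posDef_sub {A B : Matrix n n ℝ} (hA : A.PosSemidef)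
    (hAB : (B - A).PosDef) : A.det < B.det := by
  have hB : B.PosDef := by simpa using hAB.add_posSemidef hA
  obtain ⟨Q, rfl⟩ := CStarAlgebra.nonneg_iff_eq_star_mul_self.mp hB.posSemidef.nonneg
  lift Q to (Matrix n n ℝ)ˣ using isUnit_of_mul_isUnit_right hB.isUnit
  set P : Matrix n n ℝ := ↑Q⁻¹
  have hPQ : P * Q = 1 := Q.inv_mul
  set C := Pᴴ * A * P
  have hAC : A = star (Q : Matrix n n ℝ) * C * Q := by
    have hQP : star (Q : Matrix n n ℝ) * Pᴴ = 1 := by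
      rw [← star_eq_conjTranspose, ← star_mul, hPQ, star_one]
    simp only [C, ← Matrix.mul_assoc, hQP, Matrix.one_mul]
    simp only [Matrix.mul_assoc, hPQ, Matrix.mul_one]
  have hC : C.PosSemidef := hA.conjTranspose_mul_mul_same P
  have h1C : (1 - C).PosDef := by
    rw [← Q.isUnit.posDef_star_left_conjugate_iff]
    convert hAB using 1
    rw [hAC]
    noncomm_ring
  clear_value C
  have hdet : A.det = C.det * (star (Q : Matrix n n ℝ) * Q).det := by
    rw [hAC, det_mul, det_mul, det_mul]
    ring
  rw [hdet]
  exact mul_lt_of_lt_one_left hB.det_pos (hC.det_lt_one_of_posDef_one_sub h1C)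

end Determinant

section SchurComplement

variable {k l : Type*}

theorem IsHermitian.fromBlocks_toBlocks {α : Type*} [InvolutiveStar α]
    {S : Matrix (k ⊕ l) (k ⊕ l) α} (hS : S.IsHermitian) :
    Matrix.fromBlocks S.toBlocks₁₁ S.toBlocks₁₂ S.toBlocks₁₂ᴴ S.toBlocks₂₂ = S := by
  rw [← Matrix.fromBlocks_toBlocks S] at hS
  rw [(isHermitian_fromBlocks_iff.mp hS).2.1, Matrix.fromBlocks_toBlocks]

variable [DecidableEq k] [DecidableEq l]

theorem fromBlocks_add_smul_one {R α : Type*} [Semiring α] [Monoid R] [DistribMulAction R α]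
    (A : Matrix k k α) (B : Matrix k l α) (C : Matrix l k α) (D : Matrix l l α) (c : R) :
    fromBlocks A B C D + c • 1 = fromBlocks (A + c • 1) B C (D + c • 1) := by
  rw [← fromBlocks_one, fromBlocks_smul, fromBlocks_add]
  simp

variable [Fintype k] [Fintype l]

theorem det_fromBlocks_div_det {α : Type*} [Field α] {A : Matrix k k α} (B : Matrix k l α)
    (C : Matrix l k α) (D : Matrix l l α) (hA : IsUnit A.det) :
    (fromBlocks A B C D).det / A.det = (D - C * A⁻¹ * B).det := by
  let _ := A.invertibleOfIsUnitDet hA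
  rw [det_fromBlocks₁₁, mul_div_cancel_left₀ _ hA.ne_zero, invOf_eq_nonsing_inv]

section RCLike

variable {𝕜 : Type*} [RCLike 𝕜] {A : Matrix k k 𝕜} {B : Matrix k l 𝕜} {D : Matrix l l 𝕜}
open scoped ComplexOrder

theorem PosSemidef.schur_add_smul_one (h : (fromBlocks A B Bᴴ D).PosSemidef) {c : ℝ}
    (hc : 0 < c) : (D + c • 1 - Bᴴ * (A + c • 1)⁻¹ * B).PosSemidef := by
  have hA : (A + c • 1).PosDef := (h.submatrix Sum.inl).posDef_add_smul_one hc
  let _ := (A + c • 1).invertibleOfIsUnitDet hA.det_pos.ne'.isUnit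
  rw [← hA.fromBlocks₁₁, ← fromBlocks_add_smul_one]
  exact h.add (PosDef.one.smul hc).posSemidef

theorem posDef_schur_add_smul_one_sub (hA : A.PosSemidef) {a b : ℝ} (ha : 0 < a) (hab : a < b) :
    ((D + b • 1 - Bᴴ * (A + b • 1)⁻¹ * B) - (D + a • 1 - Bᴴ * (A + a • 1)⁻¹ * B)).PosDef := by
  have hinv : ((A + a • 1)⁻¹ - (A + b • 1)⁻¹).PosSemidef :=
    (hA.posDef_add_smul_one ha).inv_sub_inv_posSemidef <| by
      rw [add_sub_add_left_eq_sub, ← sub_smul]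
      exact PosSemidef.one.smul (sub_nonneg.mpr hab.le)
  have hdiff : (D + b • 1 - Bᴴ * (A + b • 1)⁻¹ * B) - (D + a • 1 - Bᴴ * (A + a • 1)⁻¹ * B) =
      (b - a) • 1 + Bᴴ * ((A + a • 1)⁻¹ - (A + b • 1)⁻¹) * B := by
    rw [Matrix.mul_sub, Matrix.sub_mul, sub_smul]
    abel
  rw [hdiff]
  exact (PosDef.one.smul (sub_pos.mpr hab)).add_posSemidef (hinv.conjTranspose_mul_mul_same B)

end RCLike

theorem strictMonoOn_det_schur_add_smul_one [Nonempty l] {A : Matrix k k ℝ} {B : Matrix k l ℝ}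
    {D : Matrix l l ℝ} (h : (fromBlocks A B Bᴴ D).PosSemidef) :
    StrictMonoOn (fun c : ℝ => (D + c • 1 - Bᴴ * (A + c • 1)⁻¹ * B).det) (Set.Ioi 0) :=
  fun _ ha _ _ hab => (h.schur_add_smul_one ha).det_lt_det_of_posDef_sub
    (posDef_schur_add_smul_one_sub (h.submatrix Sum.inl) ha hab)

end SchurComplement

end Matrix

/-- The ratio `det(Σ + λI)/det(Σ¹¹ + λI)` (i.e. the determinant of the Schur
complement of the regularized matrix) is strictly increasing in `λ` on `(0,∞)`. -/
theorem schur_det_ratio_strict_mono {k l : Type*} [Fintype k] [Fintype l]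
    [DecidableEq k] [DecidableEq l] [Nonempty l]
    (S : Matrix (k ⊕ l) (k ⊕ l) ℝ) (hS : S.PosSemidef) :
    StrictMonoOn
      (fun lam : ℝ =>
        (S + lam • (1 : Matrix (k ⊕ l) (k ⊕ l) ℝ)).det /
          (S.toBlocks₁₁ + lam • (1 : Matrix k k ℝ)).det)
      (Set.Ioi (0 : ℝ)) := by
  obtain ⟨A, B, D, rfl⟩ : ∃ A B D, S = fromBlocks A B Bᴴ D :=
    ⟨_, _, _, hS.1.fromBlocks_toBlocks.symm⟩
  refine (strictMonoOn_det_schur_add_smul_one hS).congr fun c hc => ?_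
  have hA : (A + c • 1).PosDef := (hS.submatrix Sum.inl).posDef_add_smul_one hc
  simp only [toBlocks_fromBlocks₁₁]
  rw [fromBlocks_add_smul_one, det_fromBlocks_div_det _ _ _ hA.det_pos.ne'.isUnit]
end

section
/- Let q > 0, k, ℓ ∈ ℕ positive, and S ~ χ²(k). Then for any t > 0, E[(t − S)₊^{qℓ/2}] = [Γ(qℓ/2 + 1) / (2^{k/2} Γ((k+qℓ)/2 + 1))] · t^{(k+qℓ)/2} · ₁F₁(k/2, (k+qℓ)/2 + 1, −t/2), where ₁F₁ is Kummer's confluent hypergeometric function and (x)₊ = max(x,0). -/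
open MeasureTheory ProbabilityTheory Real

/-- Kummer's confluent hypergeometric function `₁F₁(a, b, z) = ∑ₙ (a)ₙ/(b)ₙ · zⁿ/n!`,
where `(a)ₙ` denotes the ascending Pochhammer symbol. -/
noncomputable def oneF1 (a b z : ℝ) : ℝ :=
  ∑' n : ℕ, ((ascPochhammer ℝ n).eval a / (ascPochhammer ℝ n).eval b) * z ^ n / n.factorial

/-!
With `a = k/2` and `p = qℓ/2` the expectation is
`(1/2)^a / Γ(a) · ∫₀ᵗ x^(a-1) (t-x)^p e^(-x/2) dx`. Expand the exponential and integrate term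
by term: the series of absolute values is dominated by `e^(t/2) ∫₀ᵗ x^(a-1) (t-x)^p dx`, and the
`n`-th term is the Beta integral `t^(a+p+n) Γ(a+n) Γ(p+1) / Γ(a+p+n+1)`. Finally
`Γ(x+n) = Γ(x) (x)ₙ` turns the series into `₁F₁`.
-/

open Set
open scoped Nat

theorem Real.Gamma_add_nat_eq_mul_ascPochhammer {x : ℝ} (hx : ∀ m : ℕ, x + m ≠ 0)
    (n : ℕ) :
    Gamma (x + n) = Gamma x * (ascPochhammer ℝ n).eval x := by
  induction n with
  | zero => simp
  | succ n ih =>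
    rw [Nat.cast_succ, ← add_assoc, Gamma_add_one (hx n), ih, ascPochhammer_succ_eval]
    ring

theorem integral_Ioc_rpow_mul_rpow_sub {u v c : ℝ} (hu : 0 < u) (hv : 0 < v) (hc : 0 < c) :
    ∫ x in Ioc 0 c, x ^ (u - 1) * (c - x) ^ (v - 1) =
      c ^ (u + v - 1) * (Gamma u * Gamma v / Gamma (u + v)) := by
  have hβ : Complex.betaIntegral u v =
      Complex.Gamma u * Complex.Gamma v / Complex.Gamma (u + v) := by
    rw [eq_div_iff (Complex.Gamma_ne_zero_of_re_pos (by simpa using add_pos hu hv)), mul_comm,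
      Complex.Gamma_mul_Gamma_eq_betaIntegral (by simpa) (by simpa)]
  have hofReal : ∫ x in Ioc 0 c, (x : ℂ) ^ ((u : ℂ) - 1) * ((c : ℂ) - x) ^ ((v : ℂ) - 1) =
      ((∫ x in Ioc 0 c, x ^ (u - 1) * (c - x) ^ (v - 1) : ℝ) : ℂ) := by
    rw [← integral_complex_ofReal]
    refine setIntegral_congr_fun measurableSet_Ioc fun x hx ↦ ?_
    push_cast [Complex.ofReal_cpow hx.1.le, Complex.ofReal_cpow (sub_nonneg.2 hx.2)]
    rfl
  have h := Complex.betaIntegral_scaled u v hc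
  rw [intervalIntegral.integral_of_le hc.le, hofReal, hβ] at h
  apply Complex.ofReal_injective
  rw [h]
  push_cast [Complex.ofReal_cpow hc.le, ← Complex.Gamma_ofReal]
  rfl

theorem integrableOn_Ioc_rpow_mul_rpow_sub {u v c : ℝ} (hu : 0 < u) (hv : 0 < v) (hc : 0 < c) :
    IntegrableOn (fun x ↦ x ^ (u - 1) * (c - x) ^ (v - 1)) (Ioc 0 c) := by
  -- A function that is not integrable has Bochner integral `0`.
  refine Integrable.of_integral_ne_zero ?_
  rw [integral_Ioc_rpow_mul_rpow_sub hu hv hc]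
  have := Gamma_pos_of_pos hu
  have := Gamma_pos_of_pos hv
  have := Gamma_pos_of_pos (add_pos hu hv)
  positivity

section KummerIntegral

variable {a p t : ℝ}

theorem integral_Ioc_rpow_mul_rpow_sub_mul_pow (ha : 0 < a) (hp : -1 < p) (ht : 0 < t) (n : ℕ) :
    ∫ x in Ioc 0 t, x ^ (a - 1) * (t - x) ^ p * x ^ n =
      Gamma a * Gamma (p + 1) / Gamma (a + p + 1) * t ^ (a + p) *
        ((ascPochhammer ℝ n).eval a / (ascPochhammer ℝ n).eval (a + p + 1) * t ^ n) := by
  have hb : 0 < a + p + 1 := by linarith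
  have hintegrand : ∀ x ∈ Ioc 0 t, x ^ (a - 1) * (t - x) ^ p * x ^ n =
      x ^ ((a + n) - 1) * (t - x) ^ ((p + 1) - 1) := fun x hx ↦ by
    rw [add_sub_cancel_right, add_sub_right_comm, rpow_add_natCast hx.1.ne']
    ring
  rw [setIntegral_congr_fun measurableSet_Ioc hintegrand,
    integral_Ioc_rpow_mul_rpow_sub (by positivity) (by linarith) ht,
    Gamma_add_nat_eq_mul_ascPochhammer (fun m ↦ by positivity),
    show a + n + (p + 1) = a + p + 1 + n by ring,
    Gamma_add_nat_eq_mul_ascPochhammer (fun m ↦ by positivity),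
    show a + p + 1 + n - 1 = a + p + n by ring, rpow_add_natCast ht.ne']
  have := (Gamma_pos_of_pos ha).ne'
  have := (Gamma_pos_of_pos hb).ne'
  have := (ascPochhammer_pos n _ hb).ne'
  field_simp

theorem integral_Ioc_rpow_mul_rpow_sub_mul_exp (ha : 0 < a) (hp : -1 < p) (ht : 0 < t)
    (c : ℝ) :
    ∫ x in Ioc 0 t, x ^ (a - 1) * (t - x) ^ p * exp (c * x) =
      Gamma a * Gamma (p + 1) / Gamma (a + p + 1) * t ^ (a + p) *
        oneF1 a (a + p + 1) (c * t) := by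
  set g : ℝ → ℝ := fun x ↦ x ^ (a - 1) * (t - x) ^ p
  have hg : IntegrableOn g (Ioc 0 t) := by
    simpa using integrableOn_Ioc_rpow_mul_rpow_sub ha (show 0 < p + 1 by linarith) ht
  set f : ℕ → ℝ → ℝ := fun n x ↦ g x * ((c * x) ^ n / n !)
  have hf_le : ∀ n, ∀ x ∈ Ioc 0 t, ‖f n x‖ ≤ g x * ((|c| * t) ^ n / n !) := by
    intro n x hx
    have hgx : 0 ≤ g x := mul_nonneg (rpow_nonneg hx.1.le _) (rpow_nonneg (sub_nonneg.2 hx.2) _)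
    rw [norm_mul, norm_of_nonneg hgx, norm_div, norm_pow, norm_mul, norm_of_nonneg hx.1.le,
      RCLike.norm_natCast, norm_eq_abs]
    have := hx.1.le
    gcongr
    exact hx.2
  have hf_int : ∀ n, IntegrableOn (f n) (Ioc 0 t) := fun n ↦
    (hg.mul_const _).mono' (hg.aestronglyMeasurable.mul (by fun_prop))
      (ae_restrict_of_forall_mem measurableSet_Ioc (hf_le n))
  have hf_summable : Summable fun n ↦ ∫ x in Ioc 0 t, ‖f n x‖ := by
    refine .of_nonneg_of_le (fun n ↦ integral_nonneg fun _ ↦ norm_nonneg _) (fun n ↦ ?_)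
      ((summable_pow_div_factorial (|c| * t)).mul_left (∫ x in Ioc 0 t, g x))
    rw [← integral_mul_const]
    exact setIntegral_mono_on (hf_int n).norm (hg.mul_const _) measurableSet_Ioc (hf_le n)
  calc ∫ x in Ioc 0 t, g x * exp (c * x) = ∫ x in Ioc 0 t, ∑' n, f n x := by
        simp_rw [f, tsum_mul_left, exp_eq_exp_ℝ, NormedSpace.exp_eq_tsum_div]
    _ = ∑' n, ∫ x in Ioc 0 t, f n x :=
      (integral_tsum_of_summable_integral_norm hf_int hf_summable).symm
    _ = ∑' n, c ^ n / n ! * ∫ x in Ioc 0 t, g x * x ^ n := by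
      refine tsum_congr fun n ↦ ?_
      rw [← integral_const_mul]
      congr 1 with x
      simp only [f, mul_pow]
      ring
    _ = _ := by
      simp_rw [g, integral_Ioc_rpow_mul_rpow_sub_mul_pow ha hp ht, oneF1, ← tsum_mul_left]
      refine tsum_congr fun n ↦ ?_
      ring

end KummerIntegral

theorem ProbabilityTheory.integral_gammaMeasure_eq_integral_smul {E : Type*}
    [NormedAddCommGroup E] [NormedSpace ℝ E] {a r : ℝ} (ha : 0 < a) (hr : 0 < r) (f : ℝ → E) :
    ∫ x, f x ∂gammaMeasure a r = ∫ x, gammaPDFReal a r x • f x := by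
  rw [gammaMeasure, integral_withDensity_eq_integral_toReal_smul (f := gammaPDF a r)
    (measurable_gammaPDFReal a r).ennreal_ofReal (ae_of_all _ fun _ ↦ ENNReal.ofReal_lt_top)]
  simp only [gammaPDF, ENNReal.toReal_ofReal (gammaPDFReal_nonneg ha hr _)]

-- `χ²(k)` is `gammaMeasure (k / 2) (1 / 2)`.
/-- For `S ∼ χ²(k)` (i.e. `Gamma(k/2, rate 1/2)`), the moment
`E[(t − S)₊^{qℓ/2}]` is given explicitly in terms of `₁F₁`. -/
theorem chi_square_truncated_moment
    (q : ℝ) (hq : 0 < q) (k l : ℕ) (hk : 0 < k) (hl : 0 < l)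
    (t : ℝ) (ht : 0 < t) :
    ∫ s, (max (t - s) 0) ^ (q * l / 2)
        ∂(gammaMeasure ((k : ℝ) / 2) (1 / 2)) =
      (Real.Gamma (q * l / 2 + 1) /
          ((2 : ℝ) ^ ((k : ℝ) / 2) * Real.Gamma (((k : ℝ) + q * l) / 2 + 1))) *
        t ^ (((k : ℝ) + q * l) / 2) *
        oneF1 ((k : ℝ) / 2) (((k : ℝ) + q * l) / 2 + 1) (-t / 2) := by
  rw [show ((k : ℝ) + q * l) / 2 = k / 2 + q * l / 2 by ring]
  set a : ℝ := k / 2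
  set p : ℝ := q * l / 2
  have ha : 0 < a := by positivity
  have hp : 0 < p := by positivity
  -- `x = 0` must be excluded: for `a ≤ 1` the density need not vanish there.
  have hsupport : ∀ᵐ x, x ∉ Ioc 0 t → gammaPDFReal a (1 / 2) x * max (t - x) 0 ^ p = 0 := by
    filter_upwards [Measure.ae_ne volume 0] with x hx0 hx
    rcases not_and_or.1 hx with hx | hx
    · rw [gammaPDFReal, if_neg (by grind), zero_mul]
    · rw [max_eq_right (by linarith), zero_rpow hp.ne', mul_zero]
  have hdensity : ∀ x ∈ Ioc 0 t, gammaPDFReal a (1 / 2) x * max (t - x) 0 ^ p =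
      (1 / 2) ^ a / Gamma a * (x ^ (a - 1) * (t - x) ^ p * exp (-(1 / 2) * x)) := by
    intro x hx
    rw [gammaPDFReal, if_pos hx.1.le, max_eq_left (sub_nonneg.2 hx.2), neg_mul]
    ring
  rw [integral_gammaMeasure_eq_integral_smul ha one_half_pos]
  simp_rw [smul_eq_mul]
  rw [← setIntegral_eq_integral_of_ae_compl_eq_zero hsupport,
    setIntegral_congr_fun measurableSet_Ioc hdensity, integral_const_mul,
    integral_Ioc_rpow_mul_rpow_sub_mul_exp ha (by linarith) ht,
    show -(1 / 2) * t = -t / 2 by ring, one_div, inv_rpow zero_le_two]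
  have := (Gamma_pos_of_pos ha).ne'
  field_simp
end
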